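/- arXiv:1609.01490 — 2 statements merged into one kernel-verified Lean document; each statement's English description precedes it below -/
import Mathlib

section
/- The map Λ : ℕ → ℕ³ that sends ω to (i, j, k), where k is the unique natural number with T_k ≤ ω < T_{k+1} (T_k = k(k+1)(k+2)/6), ω₂ = ω − T_k, j = ⌊√(1/4 + 2ω₂) − 1/2⌋, and i = ω₂ − j(j+1)/2, is a bijection from ℕ onto the set {(i,j,k) ∈ ℕ³ : i ≤ j ≤ k}. -/
/-- T_k = k(k+1)(k+2)/6, the k-th tetrahedral number. -/
def T (k : ℕ) : ℕ := k*(k+1)*(k+2)/6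

/-- The tetrahedral map Λ(ω) = (i, j, k): k is the (unique) largest natural with
T_k ≤ ω, ω₂ = ω − T_k, j = ⌊√(1/4 + 2ω₂) − 1/2⌋, i = ω₂ − j(j+1)/2. -/
noncomputable def Lam (ω : ℕ) : ℕ × ℕ × ℕ :=
  let k : ℕ := Nat.findGreatest (fun k => T k ≤ ω) ω
  let ω₂ : ℕ := ω - T k
  let j : ℕ := ⌊Real.sqrt (1/4 + 2*(ω₂:ℝ)) - 1/2⌋₊
  (ω₂ - j*(j+1)/2, j, k)

/-- triangular numbers -/
def tri (j : ℕ) : ℕ := j*(j+1)/2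

lemma two_mul_tri (j : ℕ) : 2 * tri j = j * (j+1) :=
  Nat.mul_div_cancel' ((Nat.even_mul_succ_self j).two_dvd)

lemma six_dvd_prod (k : ℕ) : 6 ∣ k*(k+1)*(k+2) := by
  induction k with
  | zero => simp
  | succ n ih =>
    have h2 : Even ((n+1) * (n+2)) := Nat.even_mul_succ_self (n+1)
    obtain ⟨m, hm⟩ := h2
    have key : (n+1)*(n+1+1)*(n+1+2) = n*(n+1)*(n+2) + 3*((n+1)*(n+2)) := by ring
    rw [key]
    exact dvd_add ih ⟨m, by omega⟩

lemma six_mul_T (k : ℕ) : 6 * T k = k*(k+1)*(k+2) :=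
  Nat.mul_div_cancel' (six_dvd_prod k)

lemma T_succ (k : ℕ) : T (k+1) = T k + tri (k+1) := by
  have h1 := six_mul_T k
  have h2 := six_mul_T (k+1)
  have h3 := two_mul_tri (k+1)
  have hr : (k+1)*(k+1+1)*(k+1+2) = k*(k+1)*(k+2) + 3*((k+1)*(k+1+1)) := by ring
  linarith

lemma tri_succ (j : ℕ) : tri (j+1) = tri j + (j+1) := by
  have h1 := two_mul_tri j
  have h2 := two_mul_tri (j+1)
  have hr : (j+1)*(j+1+1) = j*(j+1) + 2*(j+1) := by ring
  linarith

lemma tri_mono : Monotone tri := fun a b h =>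
  Nat.div_le_div_right (Nat.mul_le_mul h (by omega))

lemma T_mono : Monotone T := fun a b h =>
  Nat.div_le_div_right (Nat.mul_le_mul (Nat.mul_le_mul h (by omega)) (by omega))

lemma le_tri (j : ℕ) : j ≤ tri j := by
  have h1 := two_mul_tri j
  nlinarith

lemma le_T (k : ℕ) : k ≤ T k := by
  have h1 := six_mul_T k
  rcases Nat.eq_zero_or_pos k with h | h
  · simp [h]
  · have h2 : k*(2*3) ≤ k*((k+1)*(k+2)) :=
      Nat.mul_le_mul_left k (Nat.mul_le_mul (by omega) (by omega))
    have h3 : k*((k+1)*(k+2)) = k*(k+1)*(k+2) := by ring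
    linarith

/-- generic layer lemma for findGreatest -/
lemma layer_spec (f : ℕ → ℕ) (h0 : f 0 = 0) (hle : ∀ m, m ≤ f m) (ω : ℕ) :
    f (Nat.findGreatest (fun k => f k ≤ ω) ω) ≤ ω ∧
      ω < f (Nat.findGreatest (fun k => f k ≤ ω) ω + 1) := by
  constructor
  · exact Nat.findGreatest_spec (P := fun k => f k ≤ ω) (Nat.zero_le ω)
      (show f 0 ≤ ω from (le_of_eq h0).trans (Nat.zero_le ω))
  · by_contra h
    push_neg at h
    have h1 : Nat.findGreatest (fun k => f k ≤ ω) ω + 1 ≤ ω := le_trans (hle _) h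
    have h2 := Nat.le_findGreatest (P := fun k => f k ≤ ω) h1 h
    omega

lemma layer_unique (f : ℕ → ℕ) (h0 : f 0 = 0) (hle : ∀ m, m ≤ f m)
    (hmono : Monotone f) (ω k : ℕ) (h1 : f k ≤ ω) (h2 : ω < f (k+1)) :
    Nat.findGreatest (fun k => f k ≤ ω) ω = k := by
  obtain ⟨hg1, hg2⟩ := layer_spec f h0 hle ω
  set k' := Nat.findGreatest (fun k => f k ≤ ω) ω with hk'
  have hA : k' < k + 1 := by
    by_contra h
    push_neg at h
    exact absurd (le_trans (hmono h) hg1) (by omega)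
  have hB : k < k' + 1 := by
    by_contra h
    push_neg at h
    exact absurd (le_trans (hmono h) h1) (by omega)
  omega

lemma floor_sqrt_eq (j n : ℕ) (h1 : tri j ≤ n) (h2 : n < tri (j+1)) :
    ⌊Real.sqrt (1/4 + 2*(n:ℝ)) - 1/2⌋₊ = j := by
  have t1 := two_mul_tri j
  have t2 := two_mul_tri (j+1)
  have ha : j*(j+1) ≤ 2*n := by linarith
  have hb : 2*n + 2 ≤ (j+1)*(j+1+1) := by linarith
  have haR : (j:ℝ)*(j+1) ≤ 2*n := by exact_mod_cast ha
  have hbR : 2*(n:ℝ) + 2 ≤ (j+1)*(j+1+1) := by exact_mod_cast hb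
  have hs1 : (j:ℝ) + 1/2 ≤ Real.sqrt (1/4 + 2*n) := by
    rw [Real.le_sqrt (by positivity) (by positivity)]
    nlinarith
  have hs2 : Real.sqrt (1/4 + 2*(n:ℝ)) < (j:ℝ) + 3/2 := by
    rw [Real.sqrt_lt' (by positivity)]
    nlinarith
  rw [Nat.floor_eq_iff (by linarith)]
  constructor
  · linarith
  · linarith

lemma Lam_eq (ω i j k : ℕ) (hk : T k ≤ ω) (hk' : ω < T (k+1))
    (hj : tri j ≤ ω - T k) (hj' : ω - T k < tri (j+1))
    (hi : i = ω - T k - tri j) : Lam ω = (i, j, k) := by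
  have hkg : Nat.findGreatest (fun k => T k ≤ ω) ω = k :=
    layer_unique T rfl le_T T_mono ω k hk hk'
  have hfl := floor_sqrt_eq j (ω - T k) hj hj'
  simp only [Lam, hkg, hfl]
  subst hi
  rfl

/-- inverse map -/
def g (p : ℕ × ℕ × ℕ) : ℕ := T p.2.2 + tri p.2.1 + p.1

lemma Lam_g (i j k : ℕ) (hij : i ≤ j) (hjk : j ≤ k) :
    Lam (T k + tri j + i) = (i, j, k) := by
  set ω := T k + tri j + i with hω
  apply Lam_eq
  · omega
  · have h1 : tri j ≤ tri k := tri_mono hjk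
    have h2 := T_succ k
    have h3 := tri_succ k
    omega
  · omega
  · have := tri_succ j
    omega
  · omega

theorem Lam_mem (ω : ℕ) :
    Lam ω ∈ {p : ℕ × ℕ × ℕ | p.1 ≤ p.2.1 ∧ p.2.1 ≤ p.2.2} ∧ g (Lam ω) = ω := by
  obtain ⟨hk1, hk2⟩ := layer_spec T rfl le_T ω
  set k := Nat.findGreatest (fun k => T k ≤ ω) ω with hkdef
  set ω₂ := ω - T k with hω₂
  obtain ⟨hj1, hj2⟩ := layer_spec tri rfl le_tri ω₂
  set j := Nat.findGreatest (fun k => tri k ≤ ω₂) ω₂ with hjdef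
  have hL : Lam ω = (ω₂ - tri j, j, k) := Lam_eq ω _ j k hk1 hk2 hj1 hj2 rfl
  have hts := tri_succ j
  have hTs := T_succ k
  have hij : ω₂ - tri j ≤ j := by omega
  have hjk : j ≤ k := by
    by_contra h
    push_neg at h
    have : tri (k+1) ≤ tri j := tri_mono h
    omega
  refine ⟨?_, ?_⟩
  · rw [hL]; exact ⟨hij, hjk⟩
  · rw [hL]; simp only [g]; omega

/-- Λ is a bijection from ℕ onto {(i,j,k) : i ≤ j ≤ k}. -/
theorem Lam_bijOn :
    Set.BijOn Lam Set.univ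
      {p : ℕ × ℕ × ℕ | p.1 ≤ p.2.1 ∧ p.2.1 ≤ p.2.2} := by
  have hinv : Set.InvOn g Lam Set.univ
      {p : ℕ × ℕ × ℕ | p.1 ≤ p.2.1 ∧ p.2.1 ≤ p.2.2} := by
    constructor
    · intro ω _
      exact (Lam_mem ω).2
    · rintro ⟨i, j, k⟩ ⟨hij, hjk⟩
      exact Lam_g i j k hij hjk
  exact hinv.bijOn (fun ω _ => (Lam_mem ω).1) (fun p _ => Set.mem_univ _)
end

section
/- The map u(x) = (a, b) with a = ⌊(−(2n+1) + √(4n² − 4n − 8x + 1))/(−2)⌋ and b = (a+1) + x − (a−1)(2n−a)/2 maps the linear thread index x, for 0 ≤ x < n(n−1)/2, into the strictly upper triangular region: 1 ≤ a < b ≤ n. -/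
/-!
Row `k` of the strictly upper triangle of an `n × n` matrix starts at the linear index
`rowStart n k = (k - 1)(2n - k)/2`, and `b = a + 1 + (x - rowStart n a)`. The map takes for `a`
the floor of the smaller root `utmRoot n x` of `rowStart n k = x`, so that
`rowStart n a ≤ x < rowStart n (a + 1) = rowStart n a + (n - a)`, which is `a < b ≤ n`.
Both inequalities come from comparing `(2n + 1 - 2k)²` with the discriminant; the strict one
gains the `+ 1` needed for `b ≤ n` because row starts are integers.
-/

noncomputable section

def rowStart (n k : ℝ) : ℝ := (k - 1) * (2 * n - k) / 2

def utmRoot (n x : ℝ) : ℝ := (2 * n + 1 - √((2 * n - 1) ^ 2 - 8 * x)) / 2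

end

lemma rowStart_add_one (n k : ℝ) : rowStart n (k + 1) = rowStart n k + (n - k) := by
  unfold rowStart; ring

lemma sq_sub_discr_eq (n x k : ℝ) :
    (2 * n + 1 - 2 * k) ^ 2 - ((2 * n - 1) ^ 2 - 8 * x) = 8 * (x - rowStart n k) := by
  unfold rowStart; ring

lemma exists_rowStart_eq_intCast (n k : ℤ) : ∃ m : ℤ, rowStart n k = m := by
  obtain ⟨r, hr⟩ := Int.even_mul_pred_self k
  refine ⟨n * (k - 1) - r, ?_⟩
  have hr' : (k : ℝ) * (k - 1) = r + r := by exact_mod_cast hr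
  unfold rowStart
  push_cast
  linear_combination -hr' / 2

lemma add_one_le_rowStart_of_lt {n k x : ℤ} (h : (x : ℝ) < rowStart n k) :
    (x : ℝ) + 1 ≤ rowStart n k := by
  obtain ⟨m, hm⟩ := exists_rowStart_eq_intCast n k
  rw [hm] at h ⊢
  exact_mod_cast Int.add_one_le_of_lt (by exact_mod_cast h)

section utmRoot

variable {n x k : ℝ}

lemma discr_nonneg_of_two_mul_lt (h : 2 * x < n * (n - 1)) : 0 ≤ (2 * n - 1) ^ 2 - 8 * x := by
  nlinarith

lemma one_le_utmRoot (hn : 0 ≤ n) (hx : 0 ≤ x) (h : 2 * x < n * (n - 1)) :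
    1 ≤ utmRoot n x := by
  have h2n : 0 ≤ 2 * n - 1 := by nlinarith
  have : √((2 * n - 1) ^ 2 - 8 * x) ≤ 2 * n - 1 := Real.sqrt_le_iff.2 ⟨h2n, by linarith⟩
  unfold utmRoot; linarith

lemma utmRoot_lt (h : 2 * x < n * (n - 1)) : utmRoot n x < n := by
  have : 1 < √((2 * n - 1) ^ 2 - 8 * x) := (Real.lt_sqrt zero_le_one).2 (by nlinarith)
  unfold utmRoot; linarith

lemma rowStart_le_of_le_utmRoot (h : 2 * x < n * (n - 1)) (hk : k ≤ utmRoot n x) :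
    rowStart n k ≤ x := by
  have hD := discr_nonneg_of_two_mul_lt h
  set s := √((2 * n - 1) ^ 2 - 8 * x)
  have hs : s ≤ 2 * n + 1 - 2 * k := by unfold utmRoot at hk; linarith
  have := pow_le_pow_left₀ (Real.sqrt_nonneg _) hs 2
  rw [Real.sq_sqrt hD] at this
  linarith [sq_sub_discr_eq n x k]

lemma lt_rowStart_of_utmRoot_lt (h : 2 * x < n * (n - 1)) (hk : utmRoot n x < k)
    (hkn : k ≤ n) : x < rowStart n k := by
  have hD := discr_nonneg_of_two_mul_lt h
  set s := √((2 * n - 1) ^ 2 - 8 * x)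
  have hs : 2 * n + 1 - 2 * k < s := by unfold utmRoot at hk; linarith
  have := pow_lt_pow_left₀ hs (by linarith) two_ne_zero
  rw [Real.sq_sqrt hD] at this
  linarith [sq_sub_discr_eq n x k]

end utmRoot

theorem utm_map_upper_triangular_general (n : ℕ) (x : ℕ)
    (hx : x < n*(n-1)/2) :
    let a : ℤ := ⌊(-(2*(n:ℝ) + 1) + Real.sqrt (4*(n:ℝ)^2 - 4*n - 8*x + 1)) / (-2)⌋
    let b : ℝ := ((a:ℝ) + 1) + x - ((a:ℝ) - 1)*(2*n - (a:ℝ))/2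
    1 ≤ (a:ℝ) ∧ (a:ℝ) < b ∧ b ≤ n := by
  intro a b
  have hn : 1 ≤ n := Nat.pos_of_ne_zero (by rintro rfl; simp at hx)
  have h2x : 2 * (x : ℝ) < n * (n - 1) := by
    have : ((2 * x : ℕ) : ℝ) < (n * (n - 1) : ℕ) := by
      exact_mod_cast (by omega : 2 * x < n * (n - 1))
    push_cast [Nat.cast_sub hn] at this
    exact this
  have hb : b = a + 1 + x - rowStart n a := rfl
  have ha : a = ⌊utmRoot n x⌋ := by
    simp only [a, utmRoot]
    congr 1
    ring_nf
  clear_value a b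
  subst ha hb
  have ha1 : (1 : ℝ) ≤ ⌊utmRoot n x⌋ := by
    exact_mod_cast Int.le_floor.2
      (by exact_mod_cast one_le_utmRoot (Nat.cast_nonneg n) (Nat.cast_nonneg x) h2x)
  have han : (⌊utmRoot n x⌋ : ℝ) + 1 ≤ n := by
    exact_mod_cast Int.floor_lt.2 (by exact_mod_cast utmRoot_lt h2x)
  have hlo := rowStart_le_of_le_utmRoot h2x (Int.floor_le _)
  have hhi := add_one_le_rowStart_of_lt (n := n) (x := x)
    (by exact_mod_cast lt_rowStart_of_utmRoot_lt h2x (Int.lt_floor_add_one _) han)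
  push_cast at hhi
  rw [rowStart_add_one] at hhi
  exact ⟨ha1, by linarith, by linarith⟩

/-- the UTM map of Avril et al. sends each linear thread index
x ∈ [0, n(n−1)/2) into the strictly upper triangular region 1 ≤ a < b ≤ n. -/
theorem utm_map_upper_triangular (n : ℕ) (hn : 2 ≤ n) (x : ℕ)
    (hx : x < n*(n-1)/2) :
    let a : ℤ := ⌊(-(2*(n:ℝ) + 1) + Real.sqrt (4*(n:ℝ)^2 - 4*n - 8*x + 1)) / (-2)⌋
    let b : ℝ := ((a:ℝ) + 1) + x - ((a:ℝ) - 1)*(2*n - (a:ℝ))/2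
    1 ≤ (a:ℝ) ∧ (a:ℝ) < b ∧ b ≤ n :=
  utm_map_upper_triangular_general n x hx
end
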